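/- arXiv:2306.01722 — 2 statements merged into one kernel-verified Lean document; each statement's English description precedes it below -/
import Mathlib

section
/- Let A be a filtered colimit of rings A_i with colimit maps φ_i : A_i → A, and fix an index i_0. Let B = A_{i_0}[x_1,...,x_n]/(F_1,...,F_m) and C a finitely generated A_{i_0}-algebra. If φ, ψ : B → C are two A_{i_0}-algebra maps such that the induced maps B ⊗_{A_{i_0}} A → C ⊗_{A_{i_0}} A are equal, then there exists i_1 ≥ i_0 such that the induced maps B ⊗_{A_{i_0}} A_{i_1} → C ⊗_{A_{i_0}} A_{i_1} are already equal. -/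
/-!
Over the cone `{i // i₀ ≤ i}` the ring `A = colim G` is also the direct limit of the
`G i₀`-modules `G i`, and tensor products commute with direct limits of modules. Hence an
equality `c ⊗ 1 = c' ⊗ 1` in `C ⊗ A` already holds in some `C ⊗ G j`, and by directedness
finitely many such equalities hold at a common stage. Applied to the images of the generators
`x_k` of `B`, this gives a stage at which the two algebra maps `B → C ⊗ G j` agree on
generators, hence agree.
-/

open TensorProduct

namespace Module.DirectLimit

variable {R ι M : Type*} [CommSemiring R] [Preorder ι]
  {G : ι → Type*} [∀ i, AddCommMonoid (G i)] [∀ i, Module R (G i)]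
  {f : ∀ i j, i ≤ j → G i →ₗ[R] G j} [DirectedSystem G (f · · ·)]
  [AddCommMonoid M] [Module R M]

theorem tmul_map_eq_of_tmul_map_eq {i j k : ι} (hij : i ≤ j) (hjk : j ≤ k) {m m' : M}
    {g g' : G i} (h : m ⊗ₜ[R] f i j hij g = m' ⊗ₜ f i j hij g') :
    m ⊗ₜ[R] f i k (hij.trans hjk) g = m' ⊗ₜ f i k (hij.trans hjk) g' := by
  simpa only [LinearMap.lTensor_tmul, DirectedSystem.map_map' f]
    using congrArg ((f j k hjk).lTensor M) h

variable [DecidableEq ι] [IsDirectedOrder ι]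

theorem exists_tmul_map_eq_of_tmul_of_eq {i : ι} {m m' : M} {g g' : G i}
    (h : m ⊗ₜ[R] of R ι G f i g = m' ⊗ₜ of R ι G f i g') :
    ∃ j hij, m ⊗ₜ[R] f i j hij g = m' ⊗ₜ f i j hij g' := by
  apply_fun directLimitRight f M at h
  rw [directLimitRight_tmul_of, directLimitRight_tmul_of] at h
  exact exists_eq_of_of_eq h

theorem exists_forall_tmul_map_eq_of_tmul_of_eq {β : Type*} [Finite β] {i : ι} {m m' : β → M}
    {g g' : G i} (h : ∀ b, m b ⊗ₜ[R] of R ι G f i g = m' b ⊗ₜ of R ι G f i g') :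
    ∃ j hij, ∀ b, m b ⊗ₜ[R] f i j hij g = m' b ⊗ₜ f i j hij g' := by
  choose j hij hj using fun b ↦ exists_tmul_map_eq_of_tmul_of_eq (h b)
  have : Nonempty ι := ⟨i⟩
  obtain ⟨k, hk⟩ := Finite.exists_le (α := ι) (Option.elim · i j)
  exact ⟨k, hk none, fun b ↦ tmul_map_eq_of_tmul_map_eq (hij b) (hk (some b)) (hj b)⟩

end Module.DirectLimit

noncomputable section

instance {α : Type*} [Preorder α] [IsDirectedOrder α] (a : α) :
    IsDirectedOrder {x // a ≤ x} where
  directed x y :=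
    let ⟨z, hxz, hyz⟩ := exists_ge_ge x.1 y.1
    ⟨⟨z, x.2.trans hxz⟩, hxz, hyz⟩

namespace Ring.DirectLimit

variable {ι : Type*} [Preorder ι] {G : ι → Type*} [∀ i, CommRing (G i)]
  (f : ∀ i j, i ≤ j → G i →+* G j) [DirectedSystem G (f · · ·)] (i₀ : ι)

abbrev algebraOfLE (i : {i // i₀ ≤ i}) : Algebra (G i₀) (G i) := (f i₀ i i.2).toAlgebra

def linearMapOfLE (i j : {i // i₀ ≤ i}) (hij : i ≤ j) :
    letI := algebraOfLE f i₀
    G i →ₗ[G i₀] G j :=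
  letI := algebraOfLE f i₀
  (AlgHom.mk (f i j hij) fun a ↦ DirectedSystem.map_map (f := (f · · ·)) i.2 hij a).toLinearMap

theorem linearMapOfLE_apply (i j : {i // i₀ ≤ i}) (hij : i ≤ j) (x : G i) :
    linearMapOfLE f i₀ i j hij x = f i j hij x := rfl

theorem directedSystem_linearMapOfLE :
    letI := algebraOfLE f i₀
    DirectedSystem (fun i : {i // i₀ ≤ i} ↦ G i) (linearMapOfLE f i₀ · · ·) :=
  letI := algebraOfLE f i₀
  { map_self := fun _ x ↦ DirectedSystem.map_self (f := (f · · ·)) x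
    map_map := fun _ _ _ hij hjk x ↦ DirectedSystem.map_map (f := (f · · ·)) hij hjk x }

abbrev algebraOf : Algebra (G i₀) (DirectLimit G (f · · ·)) :=
  (of G (f · · ·) i₀).toAlgebra

section
variable [DecidableEq ι]

def fromModuleDirectLimit :
    letI := algebraOfLE f i₀
    letI := algebraOf f i₀
    Module.DirectLimit (fun i : {i // i₀ ≤ i} ↦ G i) (linearMapOfLE f i₀) →ₗ[G i₀]
      DirectLimit G (f · · ·) :=
  letI := algebraOfLE f i₀
  letI := algebraOf f i₀
  Module.DirectLimit.lift _ _ _ _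
    (fun i ↦ (AlgHom.mk (of G (f · · ·) i.1) fun a ↦ of_f i.2 a).toLinearMap)
    fun _ _ hij x ↦ of_f (G := G) (f := (f · · ·)) hij x

theorem fromModuleDirectLimit_of (i : {i // i₀ ≤ i}) (x : G i) :
    letI := algebraOfLE f i₀
    letI := algebraOf f i₀
    fromModuleDirectLimit f i₀ (Module.DirectLimit.of _ _ _ _ i x) = of G (f · · ·) i x :=
  letI := algebraOfLE f i₀
  letI := algebraOf f i₀
  Module.DirectLimit.lift_of ..

theorem fromModuleDirectLimit_bijective [IsDirectedOrder ι] :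
    Function.Bijective (fromModuleDirectLimit f i₀) := by
  let := algebraOfLE f i₀
  have := directedSystem_linearMapOfLE f i₀
  have : Nonempty ι := ⟨i₀⟩
  refine ⟨(injective_iff_map_eq_zero _).mpr fun z hz ↦ ?_, fun z ↦ ?_⟩
  · obtain ⟨i, x, rfl⟩ := Module.DirectLimit.exists_of z
    rw [fromModuleDirectLimit_of] at hz
    obtain ⟨j, hij, hx⟩ := of.zero_exact hz
    rw [← Module.DirectLimit.of_f (hij := show i ≤ ⟨j, i.2.trans hij⟩ from hij),
      linearMapOfLE_apply, hx, map_zero]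
  · obtain ⟨i, x, rfl⟩ := exists_of z
    obtain ⟨j, hij, hj⟩ := exists_ge_ge i i₀
    exact ⟨Module.DirectLimit.of _ _ _ _ ⟨j, hj⟩ (f i j hij x),
      by rw [fromModuleDirectLimit_of, of_f]⟩

end

theorem exists_forall_tmul_one_eq [IsDirectedOrder ι] {M β : Type*} [AddCommMonoid M]
    [Module (G i₀) M] [Finite β] {m m' : β → M}
    (h : letI := algebraOf f i₀
      ∀ b, m b ⊗ₜ[G i₀] (1 : DirectLimit G (f · · ·)) = m' b ⊗ₜ 1) :
    ∃ i₁, ∃ h : i₀ ≤ i₁,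
      letI := (f i₀ i₁ h).toAlgebra
      ∀ b, m b ⊗ₜ[G i₀] (1 : G i₁) = m' b ⊗ₜ 1 := by
  classical
  let := algebraOfLE f i₀
  let := algebraOf f i₀
  have := directedSystem_linearMapOfLE f i₀
  let e := LinearEquiv.ofBijective _ (fromModuleDirectLimit_bijective f i₀)
  let one := Module.DirectLimit.of (G i₀) _ _ (linearMapOfLE f i₀) ⟨i₀, le_rfl⟩ 1
  have h₀ : ∀ b, m b ⊗ₜ[G i₀] one = m' b ⊗ₜ one := fun b ↦
    (e.lTensor M).injective (by simpa [e, one, fromModuleDirectLimit_of] using h b)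
  obtain ⟨j, _, hj⟩ := Module.DirectLimit.exists_forall_tmul_map_eq_of_tmul_of_eq h₀
  exact ⟨j, j.2, by simpa [linearMapOfLE_apply] using hj⟩

end Ring.DirectLimit

end

theorem algHom_eq_of_baseChange_eq_at_finite_stage_general
    {ι : Type} [Preorder ι] [IsDirected ι (· ≤ ·)]
    (G : ι → Type) [∀ i, CommRing (G i)]
    (f : ∀ i j, i ≤ j → G i →+* G j)
    [DirectedSystem G fun i j h => f i j h]
    (i₀ : ι) {n m : ℕ} (F : Fin m → MvPolynomial (Fin n) (G i₀))
    {C : Type} [CommRing C] [Algebra (G i₀) C]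
    (φ ψ : (MvPolynomial (Fin n) (G i₀) ⧸ Ideal.span (Set.range F)) →ₐ[G i₀] C)
    (heq :
      letI : Algebra (G i₀) (Ring.DirectLimit G fun i j h => f i j h) :=
        (Ring.DirectLimit.of G (fun i j h => f i j h) i₀).toAlgebra
      ∀ b, (Algebra.TensorProduct.includeLeft :
          C →ₐ[G i₀] C ⊗[G i₀] (Ring.DirectLimit G fun i j h => f i j h)) (φ b) =
        (Algebra.TensorProduct.includeLeft :
          C →ₐ[G i₀] C ⊗[G i₀] (Ring.DirectLimit G fun i j h => f i j h)) (ψ b)) :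
    ∃ i₁, ∃ h : i₀ ≤ i₁,
      letI : Algebra (G i₀) (G i₁) := (f i₀ i₁ h).toAlgebra
      ∀ b, (Algebra.TensorProduct.includeLeft : C →ₐ[G i₀] C ⊗[G i₀] (G i₁)) (φ b) =
        (Algebra.TensorProduct.includeLeft : C →ₐ[G i₀] C ⊗[G i₀] (G i₁)) (ψ b) := by
  obtain ⟨i₁, h, hgen⟩ := Ring.DirectLimit.exists_forall_tmul_one_eq f i₀
    (m := fun k ↦ φ (Ideal.Quotient.mk _ (MvPolynomial.X k)))
    (m' := fun k ↦ ψ (Ideal.Quotient.mk _ (MvPolynomial.X k))) fun k ↦ heq _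
  refine ⟨i₁, h, ?_⟩
  let : Algebra (G i₀) (G i₁) := (f i₀ i₁ h).toAlgebra
  have hφψ :
      (Algebra.TensorProduct.includeLeft : C →ₐ[G i₀] C ⊗[G i₀] (G i₁)).comp φ =
        (Algebra.TensorProduct.includeLeft : C →ₐ[G i₀] C ⊗[G i₀] (G i₁)).comp ψ :=
    Ideal.Quotient.algHom_ext _ (MvPolynomial.algHom_ext hgen)
  exact DFunLike.congr_fun hφψ

/-- Let `A = colim A_i` be a filtered colimit of rings, fix `i₀`, let
`B = A_{i₀}[x_1,...,x_n]/(F_1,...,F_m)` be a finitely presented `A_{i₀}`-algebra and `C` a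
finitely generated `A_{i₀}`-algebra. If two `A_{i₀}`-algebra maps `φ, ψ : B → C` induce equal
maps after base change to `A`, then they induce equal maps after base change to some finite
stage `A_{i₁}` with `i₁ ≥ i₀`. -/
theorem algHom_eq_of_baseChange_eq_at_finite_stage
    {ι : Type} [Preorder ι] [IsDirected ι (· ≤ ·)] [Nonempty ι]
    (G : ι → Type) [∀ i, CommRing (G i)]
    (f : ∀ i j, i ≤ j → G i →+* G j)
    [DirectedSystem G fun i j h => f i j h]
    (i₀ : ι) {n m : ℕ} (F : Fin m → MvPolynomial (Fin n) (G i₀))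
    {C : Type} [CommRing C] [Algebra (G i₀) C] (hC : Algebra.FiniteType (G i₀) C)
    (φ ψ : (MvPolynomial (Fin n) (G i₀) ⧸ Ideal.span (Set.range F)) →ₐ[G i₀] C)
    (heq :
      letI : Algebra (G i₀) (Ring.DirectLimit G fun i j h => f i j h) :=
        (Ring.DirectLimit.of G (fun i j h => f i j h) i₀).toAlgebra
      ∀ b, (Algebra.TensorProduct.includeLeft :
          C →ₐ[G i₀] C ⊗[G i₀] (Ring.DirectLimit G fun i j h => f i j h)) (φ b) =
        (Algebra.TensorProduct.includeLeft :
          C →ₐ[G i₀] C ⊗[G i₀] (Ring.DirectLimit G fun i j h => f i j h)) (ψ b)) :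
    ∃ i₁, ∃ h : i₀ ≤ i₁,
      letI : Algebra (G i₀) (G i₁) := (f i₀ i₁ h).toAlgebra
      ∀ b, (Algebra.TensorProduct.includeLeft : C →ₐ[G i₀] C ⊗[G i₀] (G i₁)) (φ b) =
        (Algebra.TensorProduct.includeLeft : C →ₐ[G i₀] C ⊗[G i₀] (G i₁)) (ψ b) :=
  algHom_eq_of_baseChange_eq_at_finite_stage_general G f i₀ F φ ψ heq
end

section
/- Let A be a ring, I ⊆ A an ideal, and write A as the filtered union of its finitely generated ℤ-subalgebras A_λ, with I_λ = I ∩ A_λ. Let (A_λ^h, I_λ^h) be the Henselization of the pair (A_λ, I_λ). Then the canonical maps exhibit A = colim_λ A_λ^h and I = colim_λ I_λ^h, where the colimit is over the filtered system of subalgebras, provided (A, I) is itself a Henselian pair. -/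
/-!
The colimit `L` of the Henselizations `A_λ^h`, with the colimit `K` of the ideals `I_λ^h`, is again
a Henselian pair: a monic polynomial over `L`, an approximate root, and an inverse of the
derivative modulo `K` all descend to some `A_λ^h`, where Hensel's lemma applies. As `A` is the
union of the `A_λ`, the maps `A_λ → A_λ^h → L` glue to `φ : A → L`, and by the universal property
of `A_λ^h` the composite `φ ∘ τ_λ` is the canonical map `A_λ^h → L`. So two elements of `A_λ^h`
with the same image in `A` have the same image in `L`, i.e. they agree at a finite stage.
-/

universe u v

/-- `(H, J·H)` together with the map `σ : B → H` is the Henselization of the pair `(B, J)`. -/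
structure IsHenselization {B : Type v} {H : Type v} [CommRing B] [CommRing H]
    (J : Ideal B) (σ : B →+* H) : Prop where
  henselian : HenselianRing H (J.map σ)
  universal : ∀ (C : Type u) [CommRing C] (K : Ideal C), HenselianRing C K →
    ∀ g : B →+* C, J.map g ≤ K → ∃! h : H →+* C, h.comp σ = g

universe w u' u''

open Polynomial

theorem HenselianRing.comap_ringEquiv {R S : Type*} [CommRing R] [CommRing S] (e : S ≃+* R)
    (I : Ideal R) [HenselianRing R I] : HenselianRing S (I.comap (e : S →+* R)) where
  jac x hx := Ideal.mem_jacobson_bot.mpr fun y => by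
    simpa using (Ideal.mem_jacobson_bot.mp (HenselianRing.jac (I := I) hx) (e y)).map e.symm
  is_henselian f hf a₀ h₀ hu := by
    have hu' := hu.map (Ideal.quotientMap I (e : S →+* R) le_rfl)
    rw [Ideal.quotientMap_mk] at hu'
    obtain ⟨a, ha, hab⟩ := HenselianRing.is_henselian (f.map (e : S →+* R)) (hf.map _)
      ((e : S →+* R) a₀) (by rwa [eval_map_apply]) (by rwa [derivative_map, eval_map_apply])
    refine ⟨e.symm a, ?_, by simpa [Ideal.mem_comap] using hab⟩
    have := congrArg (e.symm : R →+* S) ha.eq_zero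
    rwa [← eval_map_apply, map_map, e.symm_comp, map_id, map_zero] at this

theorem Ideal.Quotient.isUnit_mk_iff_exists_mul_sub_one_mem {R : Type*} [CommRing R]
    {I : Ideal R} {x : R} : IsUnit (Ideal.Quotient.mk I x) ↔ ∃ c, c * x - 1 ∈ I := by
  simp_rw [← Ideal.Quotient.eq_zero_iff_mem, map_sub, map_mul, map_one, sub_eq_zero,
    isUnit_iff_exists_inv', (Ideal.Quotient.mk_surjective).exists]

theorem Ideal.le_comap_map_comp {R S T : Type*} [CommRing R] [CommRing S] [CommRing T]
    {I : Ideal R} {J : Ideal S} {g : R →+* S} {φ : S →+* T} (hg : I ≤ J.comap g) :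
    I ≤ (J.map φ).comap (φ.comp g) :=
  hg.trans (Ideal.comap_mono Ideal.le_comap_map)

namespace IsHenselization

variable {B H : Type v} [CommRing B] [CommRing H] {J : Ideal B} {σ : B →+* H}

section Lift

variable {C : Type w} [CommRing C] (K : Ideal C) [HenselianRing C K]

theorem existsUnique_lift (h : IsHenselization.{max u w} J σ) (g : B →+* C)
    (hg : J ≤ K.comap g) : ∃! f : H →+* C, f.comp σ = g := by
  -- the universal property only tests rings in universe `u`, so test it on `ULift C`
  let e : ULift.{u} C ≃+* C := ULift.ringEquiv
  have := HenselianRing.comap_ringEquiv e K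
  obtain ⟨f, hf, huniq⟩ := h.universal (ULift.{u} C) (K.comap (e : ULift C →+* C)) this
    ((e.symm : C →+* ULift C).comp g) (Ideal.map_le_iff_le_comap.mpr hg)
  beta_reduce at huniq
  refine ⟨(e : ULift C →+* C).comp f, ?_, fun f₁ (hf₁ : f₁.comp σ = g) => ?_⟩
  · show ((e : ULift C →+* C).comp f).comp σ = g
    rw [RingHom.comp_assoc, hf, ← RingHom.comp_assoc, e.comp_symm, RingHom.id_comp]
  · rw [← huniq ((e.symm : C →+* ULift C).comp f₁) (by rw [RingHom.comp_assoc, hf₁]),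
      ← RingHom.comp_assoc, e.comp_symm, RingHom.id_comp]

noncomputable def lift (h : IsHenselization.{max u w} J σ) (g : B →+* C) (hg : J ≤ K.comap g) :
    H →+* C :=
  (h.existsUnique_lift K g hg).exists.choose

theorem lift_comp (h : IsHenselization.{max u w} J σ) (g : B →+* C) (hg : J ≤ K.comap g) :
    (h.lift K g hg).comp σ = g :=
  (h.existsUnique_lift K g hg).exists.choose_spec

theorem hom_ext (h : IsHenselization.{max u w} J σ) {f₁ f₂ : H →+* C}
    (hK : J ≤ K.comap (f₁.comp σ)) (he : f₁.comp σ = f₂.comp σ) : f₁ = f₂ :=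
  (h.existsUnique_lift K _ hK).unique rfl he.symm

end Lift

section Map

variable {B' H' B'' H'' : Type v} [CommRing B'] [CommRing H'] [CommRing B''] [CommRing H'']
  {J' : Ideal B'} {σ' : B' →+* H'} {J'' : Ideal B''} {σ'' : B'' →+* H''}

noncomputable def map (h : IsHenselization.{max u v} J σ) (h' : IsHenselization.{u'} J' σ')
    (g : B →+* B') (hg : J ≤ J'.comap g) : H →+* H' :=
  haveI := h'.henselian
  h.lift (J'.map σ') (σ'.comp g) (Ideal.le_comap_map_comp hg)

theorem map_comp (h : IsHenselization.{max u v} J σ) (h' : IsHenselization.{u'} J' σ')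
    (g : B →+* B') (hg : J ≤ J'.comap g) : (h.map h' g hg).comp σ = σ'.comp g :=
  haveI := h'.henselian
  h.lift_comp _ _ _

theorem eq_map (h : IsHenselization.{max u v} J σ) (h' : IsHenselization.{u'} J' σ')
    (g : B →+* B') (hg : J ≤ J'.comap g) {f : H →+* H'} (hf : f.comp σ = σ'.comp g) :
    f = h.map h' g hg :=
  haveI := h'.henselian
  h.hom_ext (J'.map σ') (hf ▸ Ideal.le_comap_map_comp hg) (hf.trans (h.map_comp h' g hg).symm)

theorem map_eq_id (h : IsHenselization.{max u v} J σ) {g : B →+* B} (hg₁ : J ≤ J.comap g)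
    (hg₂ : g = RingHom.id B) : h.map h g hg₁ = RingHom.id H :=
  (h.eq_map h g hg₁ (by rw [hg₂, RingHom.id_comp, RingHom.comp_id])).symm

theorem map_comp_map (h : IsHenselization.{max u v} J σ) (h' : IsHenselization.{max u' v} J' σ')
    (h'' : IsHenselization.{u''} J'' σ'') {g : B →+* B'} (hg : J ≤ J'.comap g) {g' : B' →+* B''}
    (hg' : J' ≤ J''.comap g') {g'' : B →+* B''} (hg'' : J ≤ J''.comap g'')
    (hcomp : g'.comp g = g'') : (h'.map h'' g' hg').comp (h.map h' g hg) = h.map h'' g'' hg'' :=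
  h.eq_map h'' _ _ (by
    rw [RingHom.comp_assoc, map_comp, ← RingHom.comp_assoc, map_comp, RingHom.comp_assoc, hcomp])

theorem map_le_comap_map (h : IsHenselization.{max u v} J σ) (h' : IsHenselization.{u'} J' σ')
    (g : B →+* B') (hg : J ≤ J'.comap g) : J.map σ ≤ (J'.map σ').comap (h.map h' g hg) := by
  rw [← Ideal.map_le_iff_le_comap, Ideal.map_map, map_comp, ← Ideal.map_map]
  exact Ideal.map_mono (Ideal.map_le_iff_le_comap.mpr hg)

end Map

theorem directedSystem_map {ι : Type*} [Preorder ι] {B H : ι → Type v} [∀ i, CommRing (B i)]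
    [∀ i, CommRing (H i)] {f : ∀ i j, i ≤ j → B i →+* B j} [DirectedSystem B (f · · ·)]
    {J : ∀ i, Ideal (B i)} (hJ : ∀ i j h, J i ≤ (J j).comap (f i j h)) {σ : ∀ i, B i →+* H i}
    (hσ : ∀ i, IsHenselization.{max u v} (J i) (σ i)) :
    DirectedSystem H fun i j h => (hσ i).map (hσ j) (f i j h) (hJ i j h) where
  map_self i x := by
    rw [map_eq_id _ _ (RingHom.ext fun x => DirectedSystem.map_self' f x)]
    rfl
  map_map {k j i} hij hjk x := by
    rw [← RingHom.comp_apply, map_comp_map _ _ _ _ _ (hJ i k _)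
      (RingHom.ext (DirectedSystem.map_map' f hij hjk))]

end IsHenselization

namespace Ring.DirectLimit

variable {ι : Type*} [Preorder ι] {G : ι → Type*} [∀ i, CommRing (G i)]
  {f : ∀ i j, i ≤ j → G i →+* G j}

theorem of_comp {i j : ι} (hij : i ≤ j) :
    (of G (f · · ·) j).comp (f i j hij) = of G (f · · ·) i :=
  RingHom.ext (of_f hij)

variable [IsDirectedOrder ι] [Nonempty ι]

theorem exists_eq_of_of_eq [DirectedSystem G (f · · ·)] {i j : ι} {x : G i} {y : G j}
    (h : of G (f · · ·) i x = of G (f · · ·) j y) :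
    ∃ k, ∃ (hik : i ≤ k) (hjk : j ≤ k), f i k hik x = f j k hjk y := by
  apply_fun ringEquiv G f at h
  rw [ringEquiv_of, ringEquiv_of] at h
  exact Quotient.exact h

variable (J : ∀ i, Ideal (G i)) (hJ : ∀ i j h, J i ≤ (J j).comap (f i j h))

def ideal : Ideal (DirectLimit G (f · · ·)) where
  carrier := {z | ∃ i, ∃ x ∈ J i, of G (f · · ·) i x = z}
  zero_mem' := ⟨Classical.arbitrary ι, 0, zero_mem _, map_zero _⟩
  add_mem' := by
    rintro _ _ ⟨i, x, hx, rfl⟩ ⟨j, y, hy, rfl⟩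
    obtain ⟨k, hik, hjk⟩ := exists_ge_ge i j
    exact ⟨k, f i k hik x + f j k hjk y, add_mem (hJ i k hik hx) (hJ j k hjk hy),
      by rw [map_add, of_f, of_f]⟩
  smul_mem' := by
    rintro c _ ⟨i, x, hx, rfl⟩
    obtain ⟨j, c, rfl⟩ := exists_of c
    obtain ⟨k, hik, hjk⟩ := exists_ge_ge i j
    exact ⟨k, f j k hjk c * f i k hik x, Ideal.mul_mem_left _ _ (hJ i k hik hx),
      by rw [map_mul, of_f, of_f, smul_eq_mul]⟩

variable {J}

theorem of_mem_ideal {i : ι} {x : G i} (hx : x ∈ J i) : of G (f · · ·) i x ∈ ideal J hJ :=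
  ⟨i, x, hx, rfl⟩

theorem exists_monic_map_eq_and_of_eq (p : (DirectLimit G (f · · ·))[X]) (hp : p.Monic)
    (a c : DirectLimit G (f · · ·)) :
    ∃ i, ∃ q : (G i)[X], q.Monic ∧ q.map (of G (f · · ·) i) = p ∧
      ∃ b d, of G (f · · ·) i b = a ∧ of G (f · · ·) i d = c := by
  obtain ⟨i₀, p₀, rfl⟩ := Polynomial.exists_of p
  obtain ⟨i₁, b, rfl⟩ := exists_of a
  obtain ⟨i₂, d, rfl⟩ := exists_of c
  obtain ⟨i, h₀, h₁, h₂⟩ := directed_of₃ (· ≤ ·) i₀ i₁ i₂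
  obtain ⟨q, hq, -, hqm⟩ := lifts_and_natDegree_eq_and_monic
    ((mem_lifts _).mpr ⟨p₀.map (f i₀ i h₀), by rw [Polynomial.map_map, of_comp]⟩) hp
  exact ⟨i, q, hqm, hq, f i₁ i h₁ b, f i₂ i h₂ d, of_f h₁ b, of_f h₂ d⟩

theorem exists_isRoot_map_of_eval_mem [∀ i, HenselianRing (G i) (J i)] {i : ι} (q : (G i)[X])
    (hq : q.Monic) (b d : G i) (hb : q.eval b ∈ J i) (hd : d * q.derivative.eval b - 1 ∈ J i) :
    ∃ a, (q.map (of G (f · · ·) i)).IsRoot a ∧ a - of G (f · · ·) i b ∈ ideal J hJ := by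
  obtain ⟨a, ha, hab⟩ := HenselianRing.is_henselian q hq b hb
    (Ideal.Quotient.isUnit_mk_iff_exists_mul_sub_one_mem.mpr ⟨d, hd⟩)
  refine ⟨of G (f · · ·) i a, ?_, by rw [← map_sub]; exact of_mem_ideal hJ hab⟩
  rw [IsRoot, eval_map_apply, ha.eq_zero, map_zero]

variable [DirectedSystem G (f · · ·)]

theorem exists_mem_of_of_mem_ideal {i : ι} {x : G i} (hx : of G (f · · ·) i x ∈ ideal J hJ) :
    ∃ j, ∃ (hij : i ≤ j), f i j hij x ∈ J j := by
  obtain ⟨k, y, hy, hyx⟩ := hx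
  obtain ⟨j, hkj, hij, hyx⟩ := exists_eq_of_of_eq hyx
  exact ⟨j, hij, hyx ▸ hJ k j hkj hy⟩

theorem exists_mem_of_of_mem_ideal₂ {i : ι} {x y : G i}
    (hx : of G (f · · ·) i x ∈ ideal J hJ) (hy : of G (f · · ·) i y ∈ ideal J hJ) :
    ∃ j, ∃ (hij : i ≤ j), f i j hij x ∈ J j ∧ f i j hij y ∈ J j := by
  obtain ⟨j₁, hij₁, hx⟩ := exists_mem_of_of_mem_ideal hJ hx
  obtain ⟨j₂, hij₂, hy⟩ := exists_mem_of_of_mem_ideal hJ hy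
  obtain ⟨j, hj₁, hj₂⟩ := exists_ge_ge j₁ j₂
  refine ⟨j, hij₁.trans hj₁, ?_, ?_⟩
  · rw [← DirectedSystem.map_map' f hij₁ hj₁]
    exact hJ _ _ _ hx
  · rw [← DirectedSystem.map_map' f hij₂ hj₂]
    exact hJ _ _ _ hy

theorem henselianRing_ideal [∀ i, HenselianRing (G i) (J i)] :
    HenselianRing (DirectLimit G (f · · ·)) (ideal J hJ) where
  jac := by
    rintro _ ⟨i, x, hx, rfl⟩
    refine Ideal.mem_jacobson_bot.mpr fun y => ?_
    obtain ⟨j, y, rfl⟩ := exists_of y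
    obtain ⟨k, hik, hjk⟩ := exists_ge_ge i j
    have := Ideal.mem_jacobson_bot.mp (HenselianRing.jac (I := J k) (hJ i k hik hx)) (f j k hjk y)
    simpa only [map_add, map_mul, map_one, of_f] using this.map (of G (f · · ·) k)
  is_henselian p hp a₀ h₀ hu := by
    obtain ⟨c, hc⟩ := Ideal.Quotient.isUnit_mk_iff_exists_mul_sub_one_mem.mp hu
    obtain ⟨i, q, hq, rfl, b, d, rfl, rfl⟩ := exists_monic_map_eq_and_of_eq p hp a₀ c
    rw [eval_map_apply] at h₀
    rw [derivative_map, eval_map_apply, ← map_mul, ← map_one (of G (f · · ·) i), ← map_sub] at hc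
    obtain ⟨j, hij, hbj, hdj⟩ := exists_mem_of_of_mem_ideal₂ hJ h₀ hc
    obtain ⟨a, ha, hab⟩ := exists_isRoot_map_of_eval_mem hJ (q.map (f i j hij)) (hq.map _)
      (f i j hij b) (f i j hij d) (by rwa [eval_map_apply]) (by
        rwa [derivative_map, eval_map_apply, ← map_mul, ← map_one (f i j hij), ← map_sub])
    rw [Polynomial.map_map, of_comp] at ha
    rw [of_f] at hab
    exact ⟨a, ha, hab⟩

end Ring.DirectLimit

namespace Subalgebra

variable {R A : Type*} [CommSemiring R] [CommSemiring A] [Algebra R A]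

instance : IsDirectedOrder {S : Subalgebra R A // S.FG} :=
  ⟨fun s t => ⟨⟨s.1 ⊔ t.1, s.2.sup t.2⟩, le_sup_left (b := t.1), le_sup_right (a := s.1)⟩⟩

instance : Nonempty {S : Subalgebra R A // S.FG} := ⟨⟨⊥, fg_bot⟩⟩

instance : DirectedSystem (fun s : {S : Subalgebra R A // S.FG} => ↥s.1)
    fun (s t : {S : Subalgebra R A // S.FG}) (h : s ≤ t) => (inclusion h).toRingHom where
  map_self _ _ := rfl
  map_map _ _ _ _ _ _ := rfl

theorem exists_fg_mem (a : A) : ∃ s : {S : Subalgebra R A // S.FG}, a ∈ s.1 :=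
  ⟨⟨Algebra.adjoin R {a}, ⟨{a}, by simp⟩⟩, Algebra.subset_adjoin rfl⟩

theorem iSup_fg : ⨆ s : {S : Subalgebra R A // S.FG}, s.1 = ⊤ :=
  eq_top_iff.mpr fun a _ =>
    let ⟨s, hs⟩ := exists_fg_mem (R := R) a
    le_iSup (fun s : {S : Subalgebra R A // S.FG} => s.1) s hs

end Subalgebra

namespace FGSubalgebraHenselization

open Ring.DirectLimit

variable {A : Type} [CommRing A] {I : Ideal A} {H : {S : Subalgebra ℤ A // S.FG} → Type}
  [∀ s, CommRing (H s)] {σ : ∀ s : {S : Subalgebra ℤ A // S.FG}, ↥s.1 →+* H s}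
  (hσ : ∀ s : {S : Subalgebra ℤ A // S.FG},
    IsHenselization.{u} (I.comap (s.1.val : ↥s.1 →ₐ[ℤ] A).toRingHom) (σ s))

noncomputable abbrev transition (s t : {S : Subalgebra ℤ A // S.FG}) (h : s ≤ t) : H s →+* H t :=
  (hσ s).map (hσ t) (Subalgebra.inclusion h).toRingHom fun _ hx => hx

theorem directedSystem_transition : DirectedSystem H (transition hσ · · ·) :=
  IsHenselization.directedSystem_map (f := fun (s t : {S : Subalgebra ℤ A // S.FG}) (h : s ≤ t) =>
    (Subalgebra.inclusion h).toRingHom) _ hσ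

theorem map_le_comap_transition (s t : {S : Subalgebra ℤ A // S.FG}) (h : s ≤ t) :
    (I.comap (s.1.val : ↥s.1 →ₐ[ℤ] A).toRingHom).map (σ s) ≤
      ((I.comap (t.1.val : ↥t.1 →ₐ[ℤ] A).toRingHom).map (σ t)).comap (transition hσ s t h) :=
  (hσ s).map_le_comap_map (hσ t) _ _

noncomputable abbrev colimitIdeal : Ideal (Ring.DirectLimit H (transition hσ · · ·)) :=
  ideal (fun s => (I.comap (s.1.val : ↥s.1 →ₐ[ℤ] A).toRingHom).map (σ s))
    (map_le_comap_transition hσ)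

theorem henselianRing_colimitIdeal :
    HenselianRing (Ring.DirectLimit H (transition hσ · · ·)) (colimitIdeal hσ) :=
  haveI := directedSystem_transition hσ
  haveI := fun s => (hσ s).henselian
  henselianRing_ideal _

theorem transition_comp {s t : {S : Subalgebra ℤ A // S.FG}} (h : s ≤ t) :
    (transition hσ s t h).comp (σ s) = (σ t).comp (Subalgebra.inclusion h).toRingHom :=
  IsHenselization.map_comp _ _ _ _

theorem of_apply_inclusion {s t : {S : Subalgebra ℤ A // S.FG}} (h : s ≤ t) (b : ↥s.1) :
    of H (transition hσ · · ·) t (σ t (Subalgebra.inclusion h b)) =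
      of H (transition hσ · · ·) s (σ s b) := by
  rw [← of_f h (σ s b), ← RingHom.comp_apply (transition hσ s t h), transition_comp]
  rfl

noncomputable def toColimit : A →+* Ring.DirectLimit H (transition hσ · · ·) :=
  ((Subalgebra.iSupLift (fun s : {S : Subalgebra ℤ A // S.FG} => s.1) (directed_of (· ≤ ·))
    (fun s => ((of H (transition hσ · · ·) s).comp (σ s)).toIntAlgHom)
    (fun _ _ h => AlgHom.ext fun b => (of_apply_inclusion hσ h b).symm)
    ⊤ Subalgebra.iSup_fg.ge).comp Subalgebra.topEquiv.symm.toAlgHom).toRingHom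

theorem toColimit_coe {s : {S : Subalgebra ℤ A // S.FG}} (b : ↥s.1) :
    toColimit hσ b = of H (transition hσ · · ·) s (σ s b) := by
  rw [toColimit, AlgHom.toRingHom_eq_coe, RingHom.coe_coe, AlgHom.comp_apply]
  exact Subalgebra.iSupLift_of_mem (fun s : {S : Subalgebra ℤ A // S.FG} => s.1)
    (Subalgebra.topEquiv.symm b) (i := s) b.2

variable {τ : ∀ s, H s →+* A}
variable (hτ : ∀ s : {S : Subalgebra ℤ A // S.FG},
    (τ s).comp (σ s) = (s.1.val : ↥s.1 →ₐ[ℤ] A).toRingHom)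
include hσ hτ

theorem toColimit_comp (s : {S : Subalgebra ℤ A // S.FG}) :
    (toColimit hσ).comp (τ s) = of H (transition hσ · · ·) s :=
  haveI := henselianRing_colimitIdeal hσ
  Eq.symm <| (hσ s).hom_ext (colimitIdeal hσ)
    (fun _ hb => of_mem_ideal (map_le_comap_transition hσ) (Ideal.mem_map_of_mem _ hb))
    (RingHom.ext fun b => by
      simp only [RingHom.comp_apply, ← toColimit_coe hσ b]
      rw [← RingHom.comp_apply (τ s), hτ s]
      rfl)

theorem comp_transition [HenselianRing A I] {s t : {S : Subalgebra ℤ A // S.FG}} (h : s ≤ t) :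
    (τ t).comp (transition hσ s t h) = τ s :=
  Eq.symm <| (hσ s).hom_ext I (by rw [hτ s]) (by
    rw [hτ s, RingHom.comp_assoc, transition_comp, ← RingHom.comp_assoc, hτ t]
    rfl)

theorem exists_transition_eq_of_apply_eq {s : {S : Subalgebra ℤ A // S.FG}} {x y : H s}
    (hxy : τ s x = τ s y) : ∃ t, ∃ h : s ≤ t, transition hσ s t h x = transition hσ s t h y := by
  have := directedSystem_transition hσ
  have : of H (transition hσ · · ·) s x = of H (transition hσ · · ·) s y := by
    rw [← toColimit_comp hσ hτ, RingHom.comp_apply, hxy, RingHom.comp_apply]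
  obtain ⟨t, h, _, hst⟩ := exists_eq_of_of_eq this
  exact ⟨t, h, hst⟩

end FGSubalgebraHenselization

open FGSubalgebraHenselization in
/-- Let `(A, I)` be a Henselian pair, written as the filtered union of its
finitely generated `ℤ`-subalgebras `A_λ`, with `I_λ = I ∩ A_λ` and `(A_λ^h, I_λ^h)` the
Henselization of `(A_λ, I_λ)`. The canonical maps `τ_λ : A_λ^h → A` (obtained since `(A, I)` is
Henselian) exhibit `A = colim A_λ^h` and `I = colim I_λ^h`: every element of `A` (resp. of `I`)
comes from some `A_λ^h` (resp. from `I_λ^h`), and any two elements of some `A_λ^h` that become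
equal in `A` already become equal at a finite stage of the system. -/
theorem henselian_pair_is_colimit_of_henselizations_of_fg_subalgebras
    {A : Type} [CommRing A] (I : Ideal A) [HenselianRing A I]
    (H : {S : Subalgebra ℤ A // S.FG} → Type)
    [∀ s, CommRing (H s)]
    (σ : ∀ s : {S : Subalgebra ℤ A // S.FG}, (↥s.1) →+* H s)
    (hσ : ∀ s : {S : Subalgebra ℤ A // S.FG},
      IsHenselization (I.comap (s.1.val : ↥s.1 →ₐ[ℤ] A).toRingHom) (σ s))
    (τ : ∀ s, H s →+* A)
    (hτ : ∀ s : {S : Subalgebra ℤ A // S.FG},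
      (τ s).comp (σ s) = (s.1.val : ↥s.1 →ₐ[ℤ] A).toRingHom) :
    (∀ a : A, ∃ s x, τ s x = a) ∧
    (∀ a ∈ I, ∃ s, ∃ x ∈ Ideal.map (σ s)
        (I.comap ((s.1.val : ↥s.1 →ₐ[ℤ] A)).toRingHom), τ s x = a) ∧
    (∀ (s : {S : Subalgebra ℤ A // S.FG}) (x y : H s), τ s x = τ s y →
      ∃ (t : {S : Subalgebra ℤ A // S.FG}) (hst : s.1 ≤ t.1) (ρ : H s →+* H t),
        ρ.comp (σ s) = (σ t).comp (Subalgebra.inclusion hst).toRingHom ∧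
        (τ t).comp ρ = τ s ∧ ρ x = ρ y) := by
  have hsurj (a : A) : ∃ s : {S : Subalgebra ℤ A // S.FG}, ∃ ha : a ∈ s.1,
      τ s (σ s ⟨a, ha⟩) = a :=
    let ⟨s, ha⟩ := Subalgebra.exists_fg_mem (R := ℤ) a
    ⟨s, ha, RingHom.congr_fun (hτ s) ⟨a, ha⟩⟩
  refine ⟨fun a => ?_, fun a ha => ?_, fun s x y hxy => ?_⟩
  · obtain ⟨s, _, hτa⟩ := hsurj a
    exact ⟨s, _, hτa⟩
  · obtain ⟨s, hs, hτa⟩ := hsurj a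
    exact ⟨s, _, Ideal.mem_map_of_mem (σ s) (show ⟨a, hs⟩ ∈ _ from ha), hτa⟩
  · obtain ⟨t, h, hρ⟩ := exists_transition_eq_of_apply_eq hσ hτ hxy
    exact ⟨t, h, transition hσ s t h, transition_comp hσ h, comp_transition hσ hτ h, hρ⟩
end
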